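/- Let M > 0 and L > 0. Define r_±(ρ,z) = √(ρ² + (z ∓ M)²) and u₀(ρ,z) = ln( (r₊ + r₋ − 2M)/(r₊ + r₋ + 2M) ), which is well defined whenever r₊ + r₋ > 2M, in particular for all (ρ,z) with ρ > 0. Then for every (ρ,z) with ρ > 0, the series Σ_{n=1}^{∞} [ u₀(ρ, z − nL) + u₀(ρ, z + nL) + 4M/(nL) ] converges absolutely. -/
import Mathlib


/-- r₊ = √(ρ² + (z − M)²). -/
noncomputable def rPlus (M ρ z : ℝ) : ℝ := Real.sqrt (ρ ^ 2 + (z - M) ^ 2)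

/-- r₋ = √(ρ² + (z + M)²). -/
noncomputable def rMinus (M ρ z : ℝ) : ℝ := Real.sqrt (ρ ^ 2 + (z + M) ^ 2)

/-- The Schwarzschild solution of mass M centered at the origin, in Weyl
coordinates: u₀ = ln((r₊ + r₋ − 2M)/(r₊ + r₋ + 2M)). -/
noncomputable def uSchw (M ρ z : ℝ) : ℝ :=
  Real.log ((rPlus M ρ z + rMinus M ρ z - 2 * M) / (rPlus M ρ z + rMinus M ρ z + 2 * M))

lemma log_bound (M s : ℝ) (hM : 0 < M) (hs : 2*M < s) :
    |Real.log ((s - 2*M)/(s + 2*M)) + 4*M/s| ≤ 8*M^2/(s*(s-2*M)) := by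
  have h0 : 0 < s := lt_trans (by linarith) hs
  have h1 : 0 < s - 2*M := by linarith
  have h2 : 0 < s + 2*M := by linarith
  have hy : 0 < (s - 2*M)/(s + 2*M) := div_pos h1 h2
  have hu : Real.log ((s - 2*M)/(s + 2*M)) ≤ (s - 2*M)/(s + 2*M) - 1 :=
    Real.log_le_sub_one_of_pos hy
  have hl : 1 - (s + 2*M)/(s - 2*M) ≤ Real.log ((s - 2*M)/(s + 2*M)) := by
    have h3 := Real.log_le_sub_one_of_pos (x := (s + 2*M)/(s - 2*M)) (div_pos h2 h1)
    have hinv : Real.log ((s + 2*M)/(s - 2*M)) = - Real.log ((s - 2*M)/(s + 2*M)) := by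
      rw [← Real.log_inv]; congr 1; field_simp
    rw [hinv] at h3; linarith
  have e1 : (s + 2*M)/(s - 2*M) - 1 - 4*M/s = 8*M^2/(s*(s-2*M)) := by
    field_simp; ring
  have e2 : (s - 2*M)/(s + 2*M) - 1 + 4*M/s = 8*M^2/(s*(s+2*M)) := by
    field_simp; ring
  have e3 : 8*M^2/(s*(s+2*M)) ≤ 8*M^2/(s*(s-2*M)) := by
    apply div_le_div_of_nonneg_left (by positivity) (by positivity)
    nlinarith
  rw [abs_le]
  constructor <;> nlinarith

lemma s_lower (M ρ w : ℝ) : 2*|w| ≤ rPlus M ρ w + rMinus M ρ w := by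
  have h1 : |w - M| ≤ rPlus M ρ w := by
    rw [← Real.sqrt_sq_eq_abs]
    exact Real.sqrt_le_sqrt (by nlinarith [sq_nonneg ρ])
  have h2 : |w + M| ≤ rMinus M ρ w := by
    rw [← Real.sqrt_sq_eq_abs]
    exact Real.sqrt_le_sqrt (by nlinarith [sq_nonneg ρ])
  have h3 : |2*w| ≤ |w - M| + |w + M| := by
    calc |2*w| = |(w - M) + (w + M)| := by ring_nf
    _ ≤ _ := abs_add_le _ _
  rw [abs_mul, abs_two] at h3
  linarith

lemma s_upper (M ρ w : ℝ) (hρ : 0 ≤ ρ) (hM : 0 ≤ M) :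
    rPlus M ρ w + rMinus M ρ w ≤ 2*|w| + 2*ρ + 2*M := by
  have h1 : rPlus M ρ w ≤ ρ + |w - M| := by
    rw [← Real.sqrt_sq (by positivity : (0:ℝ) ≤ ρ + |w - M|)]
    apply Real.sqrt_le_sqrt
    have := abs_nonneg (w - M)
    nlinarith [sq_abs (w - M)]
  have h2 : rMinus M ρ w ≤ ρ + |w + M| := by
    rw [← Real.sqrt_sq (by positivity : (0:ℝ) ≤ ρ + |w + M|)]
    apply Real.sqrt_le_sqrt
    have := abs_nonneg (w + M)
    nlinarith [sq_abs (w + M)]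
  have h3 : |w - M| ≤ |w| + M := by
    calc |w - M| ≤ |w| + |M| := abs_sub _ _
    _ = |w| + M := by rw [abs_of_nonneg hM]
  have h4 : |w + M| ≤ |w| + M := by
    calc |w + M| ≤ |w| + |M| := abs_add_le _ _
    _ = |w| + M := by rw [abs_of_nonneg hM]
  linarith

lemma half_bound (M ρ z t w : ℝ) (hM : 0 < M) (hρ : 0 < ρ)
    (ht : 2*(|z| + M + 1) ≤ t) (hw1 : t - |z| ≤ |w|) (hw2 : |w| ≤ t + |z|) :
    |uSchw M ρ w + 2*M/t| ≤ (8*M^2 + 4*M*(|z| + ρ + M))/t^2 := by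
  set s := rPlus M ρ w + rMinus M ρ w with hsdef
  have hz0 : 0 ≤ |z| := abs_nonneg z
  have ht0 : 0 < t := by linarith
  have hs1 : 2*|w| ≤ s := s_lower M ρ w
  have hs2 : s ≤ 2*|w| + 2*ρ + 2*M := s_upper M ρ w hρ.le hM.le
  have hst : t ≤ s - 2*M := by linarith
  have hs2M : 2*M < s := by linarith
  have hs0 : 0 < s := by linarith
  have hstu : t ≤ s := by linarith
  have hK : |2*t - s| ≤ 2*(|z| + ρ + M) := by
    rw [abs_le]; constructor <;> linarith
  have hu : uSchw M ρ w = Real.log ((s - 2*M)/(s + 2*M)) := rfl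
  have key1 : |uSchw M ρ w + 4*M/s| ≤ 8*M^2/t^2 := by
    rw [hu]
    refine (log_bound M s hM hs2M).trans ?_
    apply div_le_div_of_nonneg_left (by positivity) (by positivity)
    nlinarith
  have key2 : |4*M/s - 2*M/t| ≤ 4*M*(|z| + ρ + M)/t^2 := by
    have e : 4*M/s - 2*M/t = 2*M*(2*t - s)/(s*t) := by
      field_simp; ring
    rw [e, abs_div, abs_mul, abs_mul]
    rw [abs_of_nonneg (by positivity : (0:ℝ) ≤ 2), abs_of_nonneg hM.le,
      abs_of_nonneg (by positivity : (0:ℝ) ≤ s*t)]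
    rw [div_le_div_iff₀ (by positivity) (by positivity)]
    have h1 : 2*M*|2*t - s| ≤ 2*M*(2*(|z| + ρ + M)) :=
      mul_le_mul_of_nonneg_left hK (by positivity)
    have h2 : t^2 ≤ s*t := by nlinarith
    nlinarith [mul_le_mul_of_nonneg_right h1 (sq_nonneg t),
      mul_le_mul_of_nonneg_left h2 (by positivity : (0:ℝ) ≤ 4*M*(|z| + ρ + M))]
  calc |uSchw M ρ w + 2*M/t|
      = |(uSchw M ρ w + 4*M/s) + (2*M/t - 4*M/s)| := by congr 1; ring
    _ ≤ |uSchw M ρ w + 4*M/s| + |2*M/t - 4*M/s| := abs_add_le _ _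
    _ = |uSchw M ρ w + 4*M/s| + |4*M/s - 2*M/t| := by rw [abs_sub_comm]
    _ ≤ 8*M^2/t^2 + 4*M*(|z| + ρ + M)/t^2 := add_le_add key1 key2
    _ = (8*M^2 + 4*M*(|z| + ρ + M))/t^2 := by ring

/-- for every (ρ, z) with ρ > 0, the series
Σ_{n≥1} [u₀(ρ, z − nL) + u₀(ρ, z + nL) + 4M/(nL)] converges absolutely. -/
theorem periodic_schwarzschild_series_converges_absolutely
    (M L : ℝ) (hM : 0 < M) (hL : 0 < L) :
    ∀ ρ z : ℝ, 0 < ρ →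
      Summable (fun n : ℕ =>
        |uSchw M ρ (z - (n + 1) * L) + uSchw M ρ (z + (n + 1) * L)
          + 4 * M / ((n + 1) * L)|) := by
  intro ρ z hρ
  obtain ⟨N, hN⟩ := exists_nat_ge (2*(|z| + M + 1)/L)
  have hNL : 2*(|z| + M + 1) ≤ (N:ℝ)*L := by
    rw [div_le_iff₀ hL] at hN; linarith
  set C : ℝ := 2*(8*M^2 + 4*M*(|z| + ρ + M)) with hC
  have hC0 : 0 ≤ C := by positivity
  apply (summable_nat_add_iff N).1
  -- majorant
  have hmaj : Summable (fun n : ℕ => C/L^2 * (1/((n:ℝ)+1)^2)) := by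
    apply Summable.mul_left
    have h2 : Summable (fun n : ℕ => 1/((n:ℝ))^2) :=
      Real.summable_one_div_nat_pow.2 one_lt_two
    have := (summable_nat_add_iff (f := fun n : ℕ => 1/((n:ℝ))^2) 1).2 h2
    refine this.congr fun n => ?_
    push_cast; ring
  apply Summable.of_nonneg_of_le (fun n => abs_nonneg _) ?_ hmaj
  intro n
  set t : ℝ := (((n + N : ℕ) : ℝ) + 1) * L with htdef
  have hz0 : 0 ≤ |z| := abs_nonneg z
  have htN : (N:ℝ)*L ≤ t := by
    rw [htdef]
    have : (N:ℝ) ≤ ((n + N : ℕ) : ℝ) + 1 := by push_cast; linarith [Nat.cast_nonneg (α := ℝ) n]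
    nlinarith
  have ht : 2*(|z| + M + 1) ≤ t := le_trans hNL htN
  have ht0 : 0 < t := by linarith
  have htn : ((n:ℝ)+1)*L ≤ t := by
    rw [htdef]
    have : (n:ℝ) + 1 ≤ ((n + N : ℕ) : ℝ) + 1 := by push_cast; linarith [Nat.cast_nonneg (α := ℝ) N]
    nlinarith
  have hb1 : |uSchw M ρ (z - t) + 2*M/t| ≤ (8*M^2 + 4*M*(|z| + ρ + M))/t^2 := by
    apply half_bound M ρ z t (z - t) hM hρ ht
    · have := abs_sub_abs_le_abs_sub t z
      rw [abs_of_pos ht0, abs_sub_comm] at this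
      linarith
    · calc |z - t| ≤ |z| + |t| := abs_sub _ _
        _ = t + |z| := by rw [abs_of_pos ht0]; ring
  have hb2 : |uSchw M ρ (z + t) + 2*M/t| ≤ (8*M^2 + 4*M*(|z| + ρ + M))/t^2 := by
    apply half_bound M ρ z t (z + t) hM hρ ht
    · have := abs_sub_abs_le_abs_sub t (-z)
      rw [abs_of_pos ht0, abs_neg] at this
      have e : t - -z = z + t := by ring
      rw [e] at this
      linarith
    · calc |z + t| ≤ |z| + |t| := abs_add_le _ _
        _ = t + |z| := by rw [abs_of_pos ht0]; ring
  have hsum : |uSchw M ρ (z - t) + uSchw M ρ (z + t) + 4*M/t| ≤ C/t^2 := by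
    calc |uSchw M ρ (z - t) + uSchw M ρ (z + t) + 4*M/t|
        = |(uSchw M ρ (z - t) + 2*M/t) + (uSchw M ρ (z + t) + 2*M/t)| := by
          congr 1; field_simp; ring
      _ ≤ |uSchw M ρ (z - t) + 2*M/t| + |uSchw M ρ (z + t) + 2*M/t| := abs_add_le _ _
      _ ≤ (8*M^2 + 4*M*(|z| + ρ + M))/t^2 + (8*M^2 + 4*M*(|z| + ρ + M))/t^2 :=
          add_le_add hb1 hb2
      _ = C/t^2 := by rw [hC]; ring
  have hfinal : C/t^2 ≤ C/L^2 * (1/((n:ℝ)+1)^2) := by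
    rw [div_mul_div_comm, mul_one]
    apply div_le_div_of_nonneg_left hC0 (by positivity)
    calc L^2 * ((n:ℝ)+1)^2 = (((n:ℝ)+1)*L)^2 := by ring
      _ ≤ t^2 := by nlinarith [mul_pos (by positivity : (0:ℝ) < (n:ℝ)+1) hL]
  exact hsum.trans hfinal
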